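/- Let m, n ≥ 1 be integers with m ≤ n, and let q = ⌊n/m⌋. Then there exist m+n vectors w₀, …, w_{m+n−1} ∈ S^{n−1} with the property that for every continuous map f : S^{n−1} → ℝ^{m+n−1} with f(−v) = −f(v) for all v, there exist signs e₀, …, e_{m+n−1} ∈ {+1, −1} such that 0 lies in the convex hull of the image f(X) of the set X = {eᵢ wᵢ : i = 0, …, m+n−1}, which has cardinality m+n and diameter at most π − arccos(1/q). -/

import Mathlib

open Metric RealInnerProductSpace Module

/-!
Split `n = s₀ + ⋯ + s_{m-1}` into `m` blocks with `q ≤ sₖ`, and place a regular simplex of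
`sₖ + 1` unit vectors in each of `m` mutually orthogonal subspaces of dimensions `sₖ`. This gives
`m + n` unit vectors whose pairwise inner products are `0` or `-1/sₖ`, hence of absolute value
at most `1/q`; flipping signs preserves this, so every choice of signs keeps geodesic distances
at most `π - arccos (1/q)`. The `m + n` values `f (wᵢ)` in `ℝ^{m+n-1}` are linearly dependent, and
choosing `eᵢ` as the sign of the `i`-th coefficient of a dependence turns it, by oddness of `f`,
into a convex combination of the `f (eᵢ wᵢ)` equal to `0`. When `q = 1` distinct vectors may be
antipodal, so signs can collapse two points; instead keep all `eᵢ = 1` and use a block of size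
one, whose two vectors are antipodal.
-/

theorem nonempty_linearIsometryEquiv_of_finrank_eq {E F : Type*}
    [NormedAddCommGroup E] [InnerProductSpace ℝ E] [FiniteDimensional ℝ E]
    [NormedAddCommGroup F] [InnerProductSpace ℝ F] [FiniteDimensional ℝ F]
    (h : finrank ℝ E = finrank ℝ F) : Nonempty (E ≃ₗᵢ[ℝ] F) :=
  ⟨(stdOrthonormalBasis ℝ E).equiv (stdOrthonormalBasis ℝ F) (finCongr h)⟩

theorem exists_regular_simplex {E : Type*} [NormedAddCommGroup E] [InnerProductSpace ℝ E]
    [FiniteDimensional ℝ E] {d : ℕ} (hd : d ≠ 0) (hE : finrank ℝ E = d) :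
    ∃ u : Fin (d + 1) → E, ∀ i j, ⟪u i, u j⟫ = if i = j then 1 else -(d : ℝ)⁻¹ := by
  let one : EuclideanSpace ℝ (Fin (d + 1)) := WithLp.toLp 2 fun _ => 1
  have hone : one ≠ 0 := fun h => by
    simpa [one] using congrArg (fun x : EuclideanSpace ℝ (Fin (d + 1)) => x 0) h
  have hone_single (i) : ⟪one, EuclideanSpace.single i 1⟫ = 1 := by
    simp [one, EuclideanSpace.inner_single_right]
  have hone_one : ⟪one, one⟫ = d + 1 := by
    rw [PiLp.inner_apply]; simp [one]
  have hd' : (d : ℝ) + 1 ≠ 0 := by positivity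
  -- the standard simplex of `ℝ^{d+1}`, centred at the origin, lies in the hyperplane `𝟙ᗮ ≃ E`
  let v : Fin (d + 1) → EuclideanSpace ℝ (Fin (d + 1)) := fun i =>
    EuclideanSpace.single i 1 - ((d : ℝ) + 1)⁻¹ • one
  have hv_perp (i) : v i ∈ (ℝ ∙ one)ᗮ := by
    rw [Submodule.mem_orthogonal_singleton_iff_inner_right, inner_sub_right,
      real_inner_smul_right, hone_single, hone_one, inv_mul_cancel₀ hd', sub_self]
  have hv (i j) : ⟪v i, v j⟫ = (if i = j then 1 else 0) - ((d : ℝ) + 1)⁻¹ := by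
    have hsingle : ⟪(EuclideanSpace.single i 1 : EuclideanSpace ℝ (Fin (d + 1))),
        EuclideanSpace.single j 1⟫ = if i = j then 1 else 0 := by
      simp [EuclideanSpace.inner_single_right, eq_comm]
    simp only [v, inner_sub_left, inner_sub_right, real_inner_smul_left, real_inner_smul_right,
      real_inner_comm one, hone_single, hone_one, hsingle]
    field_simp
    ring
  have : Fact (finrank ℝ (EuclideanSpace ℝ (Fin (d + 1))) = d + 1) := ⟨by simp⟩
  obtain ⟨φ⟩ := nonempty_linearIsometryEquiv_of_finrank_eq (E := (ℝ ∙ one)ᗮ) (F := E)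
    (by rw [Submodule.finrank_orthogonal_span_singleton (n := d) hone, hE])
  set c := √(((d : ℝ) + 1) / d)
  have hc : c * c = ((d : ℝ) + 1) / d := Real.mul_self_sqrt (by positivity)
  refine ⟨fun i => φ (c • ⟨v i, hv_perp i⟩), fun i j => ?_⟩
  rw [φ.inner_map_map, Submodule.coe_inner, Submodule.coe_smul, Submodule.coe_smul,
    real_inner_smul_left, real_inner_smul_right, ← mul_assoc, hc, hv]
  have : (d : ℝ) ≠ 0 := by exact_mod_cast hd
  split_ifs <;> field_simp <;> ring

theorem inner_toLp_single_single {ι : Type*} [Fintype ι] [DecidableEq ι] {F : ι → Type*}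
    [∀ k, NormedAddCommGroup (F k)] [∀ k, InnerProductSpace ℝ (F k)]
    (k l : ι) (x : F k) (y : F l) :
    ⟪(WithLp.toLp 2 (Pi.single k x) : PiLp 2 F), WithLp.toLp 2 (Pi.single l y)⟫ =
      if h : k = l then ⟪x, h ▸ y⟫ else 0 := by
  rw [PiLp.inner_apply]
  split_ifs with h
  · subst h
    rw [Finset.sum_eq_single k (fun j _ hj => by simp [Pi.single_eq_of_ne hj]) (by simp)]
    simp
  · refine Finset.sum_eq_zero fun j _ => ?_
    rcases eq_or_ne j k with rfl | hj
    · simp [Pi.single_eq_of_ne h]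
    · simp [Pi.single_eq_of_ne hj]

theorem exists_orthogonal_regular_simplices {ι E : Type*} [Fintype ι] [DecidableEq ι]
    [NormedAddCommGroup E] [InnerProductSpace ℝ E] [FiniteDimensional ℝ E]
    (s : ι → ℕ) (hs : ∀ k, s k ≠ 0) (hE : finrank ℝ E = ∑ k, s k) :
    ∃ w : (Σ k, Fin (s k + 1)) → E, ∀ a b,
      ⟪w a, w b⟫ = if a = b then 1 else if a.1 = b.1 then -(s a.1 : ℝ)⁻¹ else 0 := by
  choose u hu using fun k =>
    exists_regular_simplex (E := EuclideanSpace ℝ (Fin (s k))) (hs k) (by simp)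
  obtain ⟨φ⟩ := nonempty_linearIsometryEquiv_of_finrank_eq
    (E := PiLp 2 fun k => EuclideanSpace ℝ (Fin (s k))) (F := E) (by
      rw [hE, (WithLp.linearEquiv 2 ℝ _).finrank_eq, Module.finrank_pi_fintype]; simp)
  refine ⟨fun a => φ (WithLp.toLp 2 (Pi.single a.1 (u a.1 a.2))), ?_⟩
  rintro ⟨k, p⟩ ⟨l, q⟩
  rw [φ.inner_map_map, inner_toLp_single_single]
  by_cases hkl : k = l
  · subst hkl
    simp [hu]
  · simp [hkl]

theorem exists_block_sizes (m n : ℕ) (hm : m ≠ 0) :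
    ∃ s : Fin m → ℕ, ∑ k, s k = n ∧ (∀ k, n / m ≤ s k) ∧ ∃ k, s k = n / m := by
  have hr : n % m < m := Nat.mod_lt n (Nat.pos_of_ne_zero hm)
  refine ⟨fun k => n / m + if (k : ℕ) < n % m then 1 else 0, ?_, fun k => by simp,
    ⟨m - 1, by omega⟩, ?_⟩
  · simp [Finset.sum_add_distrib, Finset.sum_boole, Fin.card_filter_val_lt, hr.le,
      Nat.div_add_mod]
  · simp
    omega

theorem exists_unit_vectors_inner_mem_Icc (m n : ℕ) (hm : 1 ≤ m) (hmn : m ≤ n) :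
    ∃ w : Fin (m + n) → EuclideanSpace ℝ (Fin n), (∀ a, ‖w a‖ = 1) ∧
      (∀ a b, a ≠ b → ⟪w a, w b⟫ ∈ Set.Icc (-((n / m : ℕ) : ℝ)⁻¹) 0) ∧
      ∃ a b, a ≠ b ∧ ⟪w a, w b⟫ = -((n / m : ℕ) : ℝ)⁻¹ := by
  obtain ⟨s, hsum, hq_le, k₀, hk₀⟩ := exists_block_sizes m n (by omega)
  have hq : 1 ≤ n / m := (Nat.one_le_div_iff (by omega)).2 hmn
  obtain ⟨w, hw⟩ := exists_orthogonal_regular_simplices (E := EuclideanSpace ℝ (Fin n)) s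
    (fun k => by have := hq_le k; omega) (by simp [hsum])
  let σ : Fin (m + n) ≃ Σ k, Fin (s k + 1) := Fintype.equivOfCardEq <| by
    simp [Fintype.card_sigma, Finset.sum_add_distrib, hsum, add_comm]
  refine ⟨w ∘ σ, fun a => ?_, fun a b hab => ?_, σ.symm ⟨k₀, 0⟩, σ.symm ⟨k₀, ⟨1, by omega⟩⟩,
    by simp [Fin.ext_iff], by simp [hw, Fin.ext_iff, hk₀]⟩
  · have h := hw (σ a) (σ a)
    rw [if_pos rfl, real_inner_self_eq_norm_sq] at h
    exact (pow_eq_one_iff_of_nonneg (norm_nonneg _) two_ne_zero).1 h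
  · simp only [Function.comp_apply, hw, if_neg (σ.injective.ne hab)]
    split_ifs with h
    · have : ((n / m : ℕ) : ℝ) ≤ s (σ a).1 := by exact_mod_cast hq_le _
      exact ⟨neg_le_neg (inv_anti₀ (by positivity) this), by simp⟩
    · exact ⟨by simp, le_rfl⟩

theorem map_smul_of_odd {E F : Type*} [AddCommGroup E] [Module ℝ E] [AddCommGroup F] [Module ℝ F]
    {S : Set E} {f : E → F} (hf : ∀ v ∈ S, f (-v) = -f v) {v : E} (hv : v ∈ S) {e : ℝ}
    (he : e = 1 ∨ e = -1) : f (e • v) = e • f v := by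
  rcases he with rfl | rfl <;> simp [hf v hv]

theorem exists_signs_zero_mem_convexHull_image {ι E F : Type*} [Fintype ι]
    [AddCommGroup E] [Module ℝ E] [AddCommGroup F] [Module ℝ F] [FiniteDimensional ℝ F]
    {S : Set E} {f : E → F} (hf : ∀ v ∈ S, f (-v) = -f v) {w : ι → E} (hw : ∀ i, w i ∈ S)
    (hcard : finrank ℝ F < Fintype.card ι) :
    ∃ e : ι → ℝ, (∀ i, e i = 1 ∨ e i = -1) ∧
      0 ∈ convexHull ℝ (f '' Set.range fun i => e i • w i) := by
  obtain ⟨c, hc, i₀, hi₀⟩ := (Fintype.not_linearIndependent_iff (v := fun i => f (w i))).1 fun h =>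
    hcard.not_ge h.fintype_card_le_finrank
  let e i : ℝ := if 0 ≤ c i then 1 else -1
  have he i : e i = 1 ∨ e i = -1 := by unfold e; split_ifs <;> simp
  have hweight i : |c i| • f (e i • w i) = c i • f (w i) := by
    rw [map_smul_of_odd hf (hw i) (he i), smul_smul]
    unfold e
    split_ifs with h
    · rw [abs_of_nonneg h, mul_one]
    · rw [abs_of_neg (not_le.1 h), mul_neg_one, neg_neg]
  have hpos : 0 < ∑ i, |c i| :=
    Finset.sum_pos' (fun i _ => abs_nonneg _) ⟨i₀, Finset.mem_univ _, abs_pos.2 hi₀⟩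
  have := Finset.univ.centerMass_mem_convexHull (fun i _ => abs_nonneg (c i)) hpos
    (s := f '' Set.range fun i => e i • w i) (z := fun i => f (e i • w i))
    fun i _ => ⟨_, ⟨i, rfl⟩, rfl⟩
  refine ⟨e, he, ?_⟩
  rwa [Finset.centerMass, Finset.sum_congr rfl fun i _ => hweight i, hc, smul_zero] at this

theorem zero_mem_convexHull_image_of_neg_mem {E F : Type*} [AddCommGroup E] [AddCommGroup F]
    [Module ℝ F] {f : E → F} {s : Set E} {v : E} (hv : v ∈ s) (hv' : -v ∈ s)
    (hf : f (-v) = -f v) : 0 ∈ convexHull ℝ (f '' s) := by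
  refine segment_subset_convexHull (Set.mem_image_of_mem f hv) (Set.mem_image_of_mem f hv') ?_
  exact ⟨1 / 2, 1 / 2, by norm_num, by norm_num, by norm_num, by rw [hf]; module⟩

theorem injective_of_inner_lt_one {ι E : Type*} [NormedAddCommGroup E] [InnerProductSpace ℝ E]
    {v : ι → E} (hv : ∀ i, ‖v i‖ = 1) (h : ∀ i j, i ≠ j → ⟪v i, v j⟫ < 1) :
    Function.Injective v := by
  intro i j hij
  by_contra hne
  have := h i j hne
  rw [hij, real_inner_self_eq_norm_sq, hv, one_pow] at this
  exact this.false

theorem abs_inner_smul_smul_of_abs_eq_one {E : Type*} [NormedAddCommGroup E]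
    [InnerProductSpace ℝ E] {c c' : ℝ} (hc : |c| = 1) (hc' : |c'| = 1) (x y : E) :
    |⟪c • x, c' • y⟫| = |⟪x, y⟫| := by
  rw [real_inner_smul_left, real_inner_smul_right, abs_mul, abs_mul, hc, hc', one_mul, one_mul]

theorem Real.arccos_le_pi_sub_arccos_of_neg_le {x t : ℝ} (h : -t ≤ x) :
    Real.arccos x ≤ Real.pi - Real.arccos t :=
  Real.arccos_neg t ▸ Real.arccos_le_arccos h

theorem injective_smul_of_abs_inner_lt_one {ι E : Type*} [NormedAddCommGroup E]
    [InnerProductSpace ℝ E] {w : ι → E} (hw : ∀ i, ‖w i‖ = 1)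
    (h : ∀ i j, i ≠ j → |⟪w i, w j⟫| < 1) {e : ι → ℝ} (he : ∀ i, |e i| = 1) :
    Function.Injective fun i => e i • w i := by
  refine injective_of_inner_lt_one (fun i => by rw [norm_smul, Real.norm_eq_abs, he, hw, one_mul])
    fun i j hij => (le_abs_self _).trans_lt ?_
  rw [abs_inner_smul_smul_of_abs_eq_one (he i) (he j)]
  exact h i j hij

theorem arccos_inner_smul_le_of_abs_inner_le {ι E : Type*} [NormedAddCommGroup E]
    [InnerProductSpace ℝ E] {w : ι → E} (hw : ∀ i, ‖w i‖ = 1) {t : ℝ} (ht : 0 ≤ t)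
    (h : ∀ i j, i ≠ j → |⟪w i, w j⟫| ≤ t) {e : ι → ℝ} (he : ∀ i, |e i| = 1) :
    ∀ x ∈ Set.range (fun i => e i • w i), ∀ y ∈ Set.range (fun i => e i • w i),
      Real.arccos ⟪x, y⟫ ≤ Real.pi - Real.arccos t := by
  rintro _ ⟨i, rfl⟩ _ ⟨j, rfl⟩
  refine Real.arccos_le_pi_sub_arccos_of_neg_le ?_
  rcases eq_or_ne i j with rfl | hij
  · rw [real_inner_self_eq_norm_sq, norm_smul, Real.norm_eq_abs, he, hw]
    linarith
  · have := h i j hij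
    rw [← abs_inner_smul_smul_of_abs_eq_one (he i) (he j)] at this
    exact (abs_le.1 this).1

theorem stmt14 (m n : ℕ) (hm : 1 ≤ m) (hmn : m ≤ n) :
    ∃ w : Fin (m + n) → EuclideanSpace ℝ (Fin n),
      (∀ i, ‖w i‖ = 1) ∧
      ∀ f : EuclideanSpace ℝ (Fin n) → EuclideanSpace ℝ (Fin (m + n - 1)),
        ContinuousOn f (sphere 0 1) →
        (∀ v ∈ sphere (0 : EuclideanSpace ℝ (Fin n)) 1, f (-v) = -f v) →
        ∃ e : Fin (m + n) → ℝ,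
          (∀ i, e i = 1 ∨ e i = -1) ∧
          (0 : EuclideanSpace ℝ (Fin (m + n - 1))) ∈
            convexHull ℝ (f '' Set.range (fun i : Fin (m + n) => e i • w i)) ∧
          (Set.range (fun i : Fin (m + n) => e i • w i)).ncard = m + n ∧
          (∀ x ∈ Set.range (fun i : Fin (m + n) => e i • w i),
            ∀ y ∈ Set.range (fun i : Fin (m + n) => e i • w i),
              Real.arccos ⟪x, y⟫ ≤ Real.pi - Real.arccos (1 / (n / m : ℕ))) := by
  obtain ⟨w, hw, hw_Icc, a, b, hab, hwab⟩ := exists_unit_vectors_inner_mem_Icc m n hm hmn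
  have hq : (1 : ℝ) ≤ (n / m : ℕ) := by exact_mod_cast (Nat.one_le_div_iff (by omega)).2 hmn
  have hw_abs i j (h : i ≠ j) : |⟪w i, w j⟫| ≤ 1 / (n / m : ℕ) := by
    rw [one_div]
    exact abs_le.2 ⟨(hw_Icc i j h).1, (hw_Icc i j h).2.trans (by positivity)⟩
  refine ⟨w, hw, fun f _ hf => ?_⟩
  obtain ⟨e, he, hzero, hinj⟩ : ∃ e : Fin (m + n) → ℝ, (∀ i, e i = 1 ∨ e i = -1) ∧
      0 ∈ convexHull ℝ (f '' Set.range fun i => e i • w i) ∧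
      Function.Injective fun i => e i • w i := by
    rcases hq.eq_or_lt with hq1 | hq2
    · have hba : w a = -w b := by
        rwa [← hq1, inv_one, inner_eq_neg_one_iff_of_norm_eq_one (hw a) (hw b)] at hwab
      refine ⟨1, fun _ => Or.inl rfl, ?_, ?_⟩ <;> simp only [Pi.one_apply, one_smul]
      · exact zero_mem_convexHull_image_of_neg_mem ⟨b, rfl⟩ ⟨a, hba⟩ (hf _ (by simp [hw]))
      · exact injective_of_inner_lt_one hw fun i j h => (hw_Icc i j h).2.trans_lt one_pos
    · obtain ⟨e, he, hzero⟩ := exists_signs_zero_mem_convexHull_image hf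
        (fun i => mem_sphere_zero_iff_norm.2 (hw i)) (by simp; omega)
      exact ⟨e, he, hzero, injective_smul_of_abs_inner_lt_one hw
        (fun i j h => (hw_abs i j h).trans_lt ((div_lt_one (by positivity)).2 hq2))
        fun i => (abs_eq zero_le_one).2 (he i)⟩
  exact ⟨e, he, hzero, by simp [Set.ncard_range_of_injective hinj],
    arccos_inner_smul_le_of_abs_inner_le hw (by positivity) hw_abs
      fun i => (abs_eq zero_le_one).2 (he i)⟩
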